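/- Let G be a finite simple graph and M a maximum matching of G. Suppose w is a vertex not covered by M that is adjacent to both endpoints u and v of an edge uv ∈ M. Then for every vertex z ≠ w that is not covered by M, z is adjacent to neither u nor v. -/

import Mathlib

open SimpleGraph

/-- A total cover of a simple graph `G`: a pair of a vertex set `SV` and an edge set
`SE ⊆ E(G)` such that every vertex not in `SV` is adjacent to a vertex of `SV` or is an
endpoint of an edge of `SE`, and every edge not in `SE` has an endpoint in `SV` or shares
an endpoint with an edge of `SE`. -/
def IsTotalCover {V : Type*} (G : SimpleGraph V) (SV : Set V) (SE : Set (Sym2 V)) : Prop :=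
  SE ⊆ G.edgeSet ∧
  (∀ v : V, v ∉ SV → (∃ u ∈ SV, G.Adj v u) ∨ (∃ e ∈ SE, v ∈ e)) ∧
  (∀ e ∈ G.edgeSet, e ∉ SE → (∃ v ∈ SV, v ∈ e) ∨ (∃ f ∈ SE, ∃ v : V, v ∈ e ∧ v ∈ f))

/-- A matching of `G`: a set of edges of `G` that are pairwise vertex-disjoint. -/
def IsMatchingSet {V : Type*} (G : SimpleGraph V) (M : Set (Sym2 V)) : Prop :=
  M ⊆ G.edgeSet ∧ ∀ e ∈ M, ∀ f ∈ M, e ≠ f → ∀ v : V, v ∈ e → v ∉ f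

/-- A maximum matching of `G`: a matching of largest cardinality. -/
def IsMaximumMatching {V : Type*} (G : SimpleGraph V) (M : Set (Sym2 V)) : Prop :=
  IsMatchingSet G M ∧ ∀ M' : Set (Sym2 V), IsMatchingSet G M' → M'.ncard ≤ M.ncard

/-- A vertex is covered by a matching `M` if it is an endpoint of some edge of `M`. -/
def CoveredBy {V : Type*} (M : Set (Sym2 V)) (v : V) : Prop :=
  ∃ e ∈ M, v ∈ e

/-- A bad vertex with respect to a matching `M`: a vertex not covered by `M` which is
adjacent to both endpoints of some edge of `M`. -/
def IsBad {V : Type*} (G : SimpleGraph V) (M : Set (Sym2 V)) (w : V) : Prop :=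
  ¬ CoveredBy M w ∧ ∃ u v : V, s(u, v) ∈ M ∧ G.Adj w u ∧ G.Adj w v

/-- An isolated vertex: a vertex of degree 0, i.e. adjacent to no vertex. -/
def IsIsolated {V : Type*} (G : SimpleGraph V) (v : V) : Prop :=
  ∀ u : V, ¬ G.Adj v u

/-- The total graph `T(G)` of `G`: its vertices are the vertices and edges of `G`, with
adjacency given by adjacency/incidence in `G`. -/
def totalGraph {V : Type*} (G : SimpleGraph V) : SimpleGraph (V ⊕ G.edgeSet) where
  Adj x y :=
    match x, y with
    | .inl a, .inl b => G.Adj a b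
    | .inl a, .inr e => a ∈ e.1
    | .inr e, .inl a => a ∈ e.1
    | .inr e, .inr f => e ≠ f ∧ ∃ v : V, v ∈ e.1 ∧ v ∈ f.1
  symm := by
    constructor
    rintro (a | e) (b | f) h
    · exact G.symm.symm _ _ h
    · exact h
    · exact h
    · exact ⟨h.1.symm, by obtain ⟨v, h1, h2⟩ := h.2; exact ⟨v, h2, h1⟩⟩
  loopless := by
    constructor
    rintro (a | e) h
    · exact G.loopless.irrefl a h
    · exact h.1 rfl

/-! If `z`, `w` are distinct uncovered vertices with `z ~ u` and `w ~ v` for an edge `uv ∈ M`,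
then `z u v w` is an augmenting path: exchanging `uv` for `zu` and `wv` yields a matching with
one more edge, contradicting maximality. -/

section Augmenting

variable {V : Type*} {G : SimpleGraph V} {M N : Set (Sym2 V)} {a b x : V}

lemma CoveredBy.mono (hx : CoveredBy N x) (hNM : N ⊆ M) : CoveredBy M x :=
  let ⟨e, he, hxe⟩ := hx
  ⟨e, hNM he, hxe⟩

lemma coveredBy_insert {e : Sym2 V} : CoveredBy (insert e M) x ↔ x ∈ e ∨ CoveredBy M x := by
  simp [CoveredBy]

lemma ncard_insert_of_not_coveredBy (hM : M.Finite) (ha : ¬ CoveredBy M a) :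
    (insert s(a, b) M).ncard = M.ncard + 1 :=
  Set.ncard_insert_of_notMem (fun hab => ha ⟨_, hab, Sym2.mem_mk_left a b⟩) hM

lemma IsMatchingSet.mono (hM : IsMatchingSet G M) (hNM : N ⊆ M) : IsMatchingSet G N :=
  ⟨hNM.trans hM.1, fun e he f hf => hM.2 e (hNM he) f (hNM hf)⟩

lemma IsMatchingSet.not_coveredBy_diff_singleton (hM : IsMatchingSet G M) {e : Sym2 V}
    (he : e ∈ M) (hxe : x ∈ e) : ¬ CoveredBy (M \ {e}) x := by
  rintro ⟨f, ⟨hf, hfe⟩, hxf⟩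
  exact hM.2 e he f hf (Ne.symm hfe) x hxe hxf

lemma IsMatchingSet.insert (hM : IsMatchingSet G M) (hab : G.Adj a b)
    (ha : ¬ CoveredBy M a) (hb : ¬ CoveredBy M b) : IsMatchingSet G (insert s(a, b) M) := by
  have hfree : ∀ f ∈ M, ∀ x ∈ s(a, b), x ∉ f := by
    rintro f hf x hx hxf
    rcases Sym2.mem_iff.mp hx with rfl | rfl
    exacts [ha ⟨f, hf, hxf⟩, hb ⟨f, hf, hxf⟩]
  refine ⟨Set.insert_subset hab hM.1, ?_⟩
  rintro e (rfl | he) f (rfl | hf) hef x hxe hxf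
  · exact hef rfl
  · exact hfree f hf x hxe hxf
  · exact hfree e he x hxf hxe
  · exact hM.2 e he f hf hef x hxe hxf

lemma IsMaximumMatching.no_augmenting_path_three (hM : IsMaximumMatching G M) (hfin : M.Finite)
    {u v w z : V} (huv : s(u, v) ∈ M) (hw : ¬ CoveredBy M w) (hz : ¬ CoveredBy M z)
    (hzw : z ≠ w) (hwv : G.Adj w v) : ¬ G.Adj z u := by
  intro hzu
  have hu : CoveredBy M u := ⟨_, huv, Sym2.mem_mk_left u v⟩
  have hv : CoveredBy M v := ⟨_, huv, Sym2.mem_mk_right u v⟩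
  set M₀ := M \ {s(u, v)}
  have hM₀ : IsMatchingSet G M₀ := hM.1.mono Set.sdiff_subset
  have hz₀ : ¬ CoveredBy M₀ z := fun h => hz (h.mono Set.sdiff_subset)
  have hM₁ : IsMatchingSet G (insert s(z, u) M₀) :=
    hM₀.insert hzu hz₀ (hM.1.not_coveredBy_diff_singleton huv (Sym2.mem_mk_left u v))
  have hw₁ : ¬ CoveredBy (insert s(z, u) M₀) w := by
    have hwu : w ≠ u := by rintro rfl; exact hw hu
    simp only [coveredBy_insert, Sym2.mem_iff, not_or]
    exact ⟨⟨hzw.symm, hwu⟩, fun h => hw (h.mono Set.sdiff_subset)⟩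
  have hv₁ : ¬ CoveredBy (insert s(z, u) M₀) v := by
    have hvz : v ≠ z := by rintro rfl; exact hz hv
    simp only [coveredBy_insert, Sym2.mem_iff, not_or]
    exact ⟨⟨hvz, (hM.1.1 huv).ne.symm⟩,
      hM.1.not_coveredBy_diff_singleton huv (Sym2.mem_mk_right u v)⟩
  have hbigger := hM.2 _ (hM₁.insert hwv hw₁ hv₁)
  have hfin₀ : M₀.Finite := hfin.sdiff
  have hcard₀ : M₀.ncard + 1 = M.ncard := Set.ncard_sdiff_singleton_add_one huv hfin
  rw [ncard_insert_of_not_coveredBy (hfin₀.insert _) hw₁,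
    ncard_insert_of_not_coveredBy hfin₀ hz₀] at hbigger
  omega

end Augmenting

/-- if `w` is uncovered by a maximum matching `M` and adjacent to both
endpoints `u, v` of an edge of `M`, then no other uncovered vertex is adjacent to `u`
or to `v`. -/
theorem stmt_6 {V : Type*} [Fintype V] (G : SimpleGraph V)
    (M : Set (Sym2 V)) (hM : IsMaximumMatching G M)
    (w u v : V) (huv : s(u, v) ∈ M)
    (hw : ¬ CoveredBy M w) (hwu : G.Adj w u) (hwv : G.Adj w v) :
    ∀ z : V, z ≠ w → ¬ CoveredBy M z → ¬ G.Adj z u ∧ ¬ G.Adj z v := by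
  intro z hzw hz
  exact ⟨hM.no_augmenting_path_three M.toFinite huv hw hz hzw hwv,
    hM.no_augmenting_path_three M.toFinite (Sym2.eq_swap ▸ huv) hw hz hzw hwu⟩
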